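/- Let p ≥ 1 be an integer, let N be a p-rooted almost-binary phylogenetic network on X, and let {Z_1, ..., Z_d} be the maximal zig-zag trail decomposition of N. Then |A_N| = ∏_{i=1}^d |S_A(Z_i)|, |B_N| = ∏_{i=1}^d |S_B(Z_i)|, and |C_N| = ∏_{i=1}^d |S_C(Z_i)|, where A_N, B_N, C_N are the families of all, minimal, and minimum support networks of N and S_A(Z_i), S_B(Z_i), S_C(Z_i) are the families of A-, B-, and C-admissible subsets of E(Z_i), respectively. -/

import Mathlib

open Finset

variable {V : Type} [DecidableEq V] [Fintype V]

/-- The vertex set of the digraph given by the edge set `E`. -/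
def verts (E : Finset (V × V)) : Finset V :=
  E.image Prod.fst ∪ E.image Prod.snd

/-- In-degree of `v` in the digraph with edge set `E`. -/
def indeg (E : Finset (V × V)) (v : V) : ℕ :=
  (E.filter fun e => e.2 = v).card

/-- Out-degree of `v` in the digraph with edge set `E`. -/
def outdeg (E : Finset (V × V)) (v : V) : ℕ :=
  (E.filter fun e => e.1 = v).card

/-- `E` is (the edge set of) a `p`-rooted almost-binary phylogenetic network on `X`:
a finite simple DAG with exactly `p` in-degree-0 vertices, each of out-degree 1 or 2 (the roots),
whose set of in-degree-1, out-degree-0 vertices is `X` (the leaves), and all of whose other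
vertices have in-degree and out-degree in `{1, 2}`. -/
structure IsPhyloNet (E : Finset (V × V)) (p : ℕ) (X : Finset V) : Prop where
  acyclic : ∀ v : V, ¬ Relation.TransGen (fun a b => (a, b) ∈ E) v v
  roots_card : ((verts E).filter fun v => indeg E v = 0).card = p
  root_outdeg : ∀ v ∈ verts E, indeg E v = 0 → outdeg E v = 1 ∨ outdeg E v = 2
  leaves_eq : (verts E).filter (fun v => indeg E v = 1 ∧ outdeg E v = 0) = X
  internal_deg : ∀ v ∈ verts E, indeg E v ≠ 0 → v ∉ X →
    (indeg E v = 1 ∨ indeg E v = 2) ∧ (outdeg E v = 1 ∨ outdeg E v = 2)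

/-- Two directed edges share a tail or share a head. -/
def Shares (e f : V × V) : Prop := e.1 = f.1 ∨ e.2 = f.2

/-- `S` is (the edge set of) a zig-zag trail of the digraph `E`: a subgraph with `m ≥ 1`
edges which can be ordered so that consecutive edges share a head or share a tail. -/
def IsZigzagTrail (E S : Finset (V × V)) : Prop :=
  S ⊆ E ∧ ∃ l : List (V × V), l ≠ [] ∧ l.Nodup ∧ l.toFinset = S ∧ l.Chain' Shares

/-- A maximal zig-zag trail: one that is not a proper subgraph of another zig-zag trail. -/
def IsMaximalZigzagTrail (E S : Finset (V × V)) : Prop :=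
  IsZigzagTrail E S ∧ ∀ S', IsZigzagTrail E S' → ¬ S ⊂ S'

/-- The `i`-th edge (0-indexed) of a zig-zag sequence on vertices `f 0, f 1, ...`;
when `down = true` the first edge descends (`f 0 > f 1`), and directions alternate. -/
def zigEdge (f : ℕ → V) (down : Bool) (i : ℕ) : V × V :=
  if decide (i % 2 = 0) = down then (f i, f (i + 1)) else (f (i + 1), f i)

/-- `S` consists of the `m` distinct edges of the zig-zag sequence on `f 0, ..., f m`. -/
def IsZigzagShape (S : Finset (V × V)) (m : ℕ) (f : ℕ → V) (down : Bool) : Prop :=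
  S = (Finset.range m).image (zigEdge f down) ∧
  ∀ i < m, ∀ j < m, zigEdge f down i = zigEdge f down j → i = j

/-- A crown: an even number `m` of edges written cyclically as `v₀ > v₁ < ⋯ < v_m = v₀`. -/
def IsCrown (S : Finset (V × V)) : Prop :=
  ∃ m f, 1 ≤ m ∧ m % 2 = 0 ∧ f m = f 0 ∧ IsZigzagShape S m f true

/-- An M-fence: a non-crown with an even number `m` of edges,
of the form `v₀ < v₁ > ⋯ > v_m ≠ v₀`. -/
def IsMFence (S : Finset (V × V)) : Prop :=
  ¬ IsCrown S ∧ ∃ m f, 1 ≤ m ∧ m % 2 = 0 ∧ f m ≠ f 0 ∧ IsZigzagShape S m f false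

/-- A W-fence: a non-crown with an even number `m` of edges,
of the form `v₀ > v₁ < ⋯ < v_m ≠ v₀`. -/
def IsWFence (S : Finset (V × V)) : Prop :=
  ¬ IsCrown S ∧ ∃ m f, 1 ≤ m ∧ m % 2 = 0 ∧ f m ≠ f 0 ∧ IsZigzagShape S m f true

/-- An N-fence: a non-crown with an odd number `m` of edges,
of the form `v₀ > v₁ < ⋯ > v_m`. -/
def IsNFence (S : Finset (V × V)) : Prop :=
  ¬ IsCrown S ∧ ∃ m f, m % 2 = 1 ∧ IsZigzagShape S m f true

/-- A support network of `N = (V, E)`: a spanning subgraph that is itself a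
`p`-rooted almost-binary phylogenetic network on `X` (identified with its edge set). -/
def IsSupportNet (E S : Finset (V × V)) (p : ℕ) (X : Finset V) : Prop :=
  S ⊆ E ∧ verts S = verts E ∧ IsPhyloNet S p X

/-- A minimal support network: no support network is a proper subgraph of it. -/
def IsMinimalSupportNet (E S : Finset (V × V)) (p : ℕ) (X : Finset V) : Prop :=
  IsSupportNet E S p X ∧ ∀ S', IsSupportNet E S' p X → ¬ S' ⊂ S

/-- A minimum support network: one with the fewest edges among all support networks. -/
def IsMinimumSupportNet (E S : Finset (V × V)) (p : ℕ) (X : Finset V) : Prop :=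
  IsSupportNet E S p X ∧ ∀ S', IsSupportNet E S' p X → S.card ≤ S'.card

/-- `S ⊆ Z` is A-admissible (degrees taken in the ambient network `E`):
(C1) `S` contains every edge `(u,v)` of `Z` with `outdeg u = 1` or `indeg v = 1`;
(C2) of any two distinct edges of `Z` sharing a tail or a head, `S` contains at least one. -/
def AAdmissible (E Z S : Finset (V × V)) : Prop :=
  S ⊆ Z ∧
  (∀ e ∈ Z, (outdeg E e.1 = 1 ∨ indeg E e.2 = 1) → e ∈ S) ∧
  (∀ e₁ ∈ Z, ∀ e₂ ∈ Z, e₁ ≠ e₂ → Shares e₁ e₂ → e₁ ∈ S ∨ e₂ ∈ S)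

/-- A B-admissible subset: an A-admissible subset none of whose proper subsets
is A-admissible. -/
def BAdmissible (E Z S : Finset (V × V)) : Prop :=
  AAdmissible E Z S ∧ ∀ S', S' ⊂ S → ¬ AAdmissible E Z S'

/-- A C-admissible subset: an A-admissible subset of minimum cardinality. -/
def CAdmissible (E Z S : Finset (V × V)) : Prop :=
  AAdmissible E Z S ∧ ∀ S', AAdmissible E Z S' → S.card ≤ S'.card

/-- One subdivision step: an edge `(u, v)` is replaced by `(u, w), (w, v)` for a fresh
vertex `w`. -/
def SubdivStep (T T' : Finset (V × V)) : Prop :=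
  ∃ u w v, (u, v) ∈ T ∧ w ∉ verts T ∧
    T' = insert (u, w) (insert (w, v) (T.erase (u, v)))

/-- `S` is a subdivision of `T` (zero or more subdivision steps). -/
def IsSubdivisionOf (S T : Finset (V × V)) : Prop :=
  Relation.ReflTransGen SubdivStep T S

/-- A rooted binary phylogenetic tree on `X`: a 1-rooted network on `X` in which every
non-root, non-leaf vertex has in-degree 1 and out-degree 2. -/
def IsBinaryPhyloTree (T : Finset (V × V)) (X : Finset V) : Prop :=
  IsPhyloNet T 1 X ∧
  ∀ v ∈ verts T, indeg T v ≠ 0 → v ∉ X → indeg T v = 1 ∧ outdeg T v = 2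

/-- `N = (V, E)` is tree-based: it has a support tree, i.e. a spanning subgraph that is a
subdivision of some rooted binary phylogenetic tree on `X`. -/
def IsTreeBased (E : Finset (V × V)) (X : Finset V) : Prop :=
  ∃ S T, S ⊆ E ∧ verts S = verts E ∧ IsBinaryPhyloTree T X ∧ IsSubdivisionOf S T

/-- The underlying undirected simple graph of the digraph with edge set `S`. -/
def usym (S : Finset (V × V)) : SimpleGraph V where
  Adj u v := u ≠ v ∧ ((u, v) ∈ S ∨ (v, u) ∈ S)
  symm := ⟨fun _ _ h => ⟨h.1.symm, h.2.symm⟩⟩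
  loopless := ⟨fun _ h => h.1 rfl⟩

/-- Two edges of `S` lie in a common block of the underlying undirected graph:
they are equal or lie on a common cycle. -/
def SameBlock (S : Finset (V × V)) (e f : V × V) : Prop :=
  e = f ∨ ∃ (a : V) (w : (usym S).Walk a a), w.IsCycle ∧
    s(e.1, e.2) ∈ w.edges ∧ s(f.1, f.2) ∈ w.edges

/-- The number of reticulations (in-degree-2 vertices) contained in the block of the
edge `e` of `S`. -/
noncomputable def blockReticCount (S : Finset (V × V)) (e : V × V) : ℕ :=
  Set.ncard {v : V | indeg S v = 2 ∧ ∃ f ∈ S, SameBlock S e f ∧ (f.1 = v ∨ f.2 = v)}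

/-- The level of the network with edge set `S`: the maximum number of reticulations
contained in a block. -/
noncomputable def level (S : Finset (V × V)) : ℕ :=
  S.sup (blockReticCount S)

/-!
A spanning subgraph `S ⊆ E` is a support network exactly when it keeps an in-edge at every
vertex having one in `E`, and an out-edge at every vertex having one. As degrees are at most two,
the edges competing for the in- or out-edge of a vertex share a head or a tail and therefore lie
in one maximal zig-zag trail; keeping one of them is then precisely A-admissibility on that
trail. So support networks are free choices of one A-admissible subset per trail, and since the
trails partition `E`, inclusion and edge counts are also computed trail by trail, which gives
the statements for minimal and minimum support networks.
-/
section Partition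

open Function

variable {α ι : Type*} [DecidableEq α] [Fintype ι] {E : Finset α} {Z : ι → Finset α}

theorem Finset.biUnion_inter_of_subset_biUnion (hcover : univ.biUnion Z = E) {S : Finset α}
    (hS : S ⊆ E) : univ.biUnion (fun i => S ∩ Z i) = S := by
  rw [← inter_biUnion, hcover, inter_eq_left.2 hS]

theorem Finset.biUnion_subset_of_forall_subset (hcover : univ.biUnion Z = E)
    {t : ι → Finset α} (ht : ∀ j, t j ⊆ Z j) : univ.biUnion t ⊆ E :=
  hcover ▸ biUnion_mono fun i _ => ht i

theorem Finset.biUnion_inter_of_pairwise_disjoint (hdisj : Pairwise (Disjoint on Z))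
    {t : ι → Finset α} (ht : ∀ j, t j ⊆ Z j) (i : ι) : univ.biUnion t ∩ Z i = t i := by
  ext e
  simp only [mem_inter, mem_biUnion, mem_univ, true_and]
  refine ⟨fun ⟨⟨j, hj⟩, hi⟩ => ?_, fun he => ⟨⟨i, he⟩, ht i he⟩⟩
  obtain rfl | hji := eq_or_ne j i
  · exact hj
  · exact absurd hi (disjoint_left.1 (hdisj hji) (ht j hj))

theorem Finset.card_eq_sum_card_inter (hdisj : Pairwise (Disjoint on Z))
    (hcover : univ.biUnion Z = E) {S : Finset α} (hS : S ⊆ E) :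
    S.card = ∑ i, (S ∩ Z i).card := by
  conv_lhs => rw [← biUnion_inter_of_subset_biUnion hcover hS]
  exact card_biUnion fun i _ j _ hij => (hdisj hij).mono inter_subset_right inter_subset_right

structure IsBlockProduct (E : Finset α) (Z : ι → Finset α) (Q : Finset α → Prop)
    (R : ι → Finset α → Prop) : Prop where
  pairwise_disjoint : Pairwise (Disjoint on Z)
  biUnion_eq : univ.biUnion Z = E
  subset : ∀ S, Q S → S ⊆ E
  subset_block : ∀ i T, R i T → T ⊆ Z i
  iff_forall_inter : ∀ S, S ⊆ E → (Q S ↔ ∀ i, R i (S ∩ Z i))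

namespace IsBlockProduct

variable {Q : Finset α → Prop} {R : ι → Finset α → Prop}

theorem ncard_eq_prod (h : IsBlockProduct E Z Q R) :
    {S | Q S}.ncard = ∏ i, {T | R i T}.ncard := by
  have hglue (t : ∀ i, {T // R i T}) : Q (univ.biUnion fun i => (t i).1) := by
    have ht j : (t j).1 ⊆ Z j := h.subset_block j _ (t j).2
    rw [h.iff_forall_inter _ (biUnion_subset_of_forall_subset h.biUnion_eq ht)]
    intro i
    rw [biUnion_inter_of_pairwise_disjoint h.pairwise_disjoint ht]
    exact (t i).2
  let e : {S // Q S} ≃ ∀ i, {T // R i T} :=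
    { toFun S i := ⟨S.1 ∩ Z i, (h.iff_forall_inter S.1 (h.subset S.1 S.2)).1 S.2 i⟩
      invFun t := ⟨_, hglue t⟩
      left_inv S := Subtype.ext (biUnion_inter_of_subset_biUnion h.biUnion_eq (h.subset S.1 S.2))
      right_inv t := funext fun i => Subtype.ext <|
        biUnion_inter_of_pairwise_disjoint h.pairwise_disjoint
          (fun j => h.subset_block j _ (t j).2) i }
  simp only [← Nat.card_coe_set_eq]
  exact (Nat.card_congr e).trans Nat.card_pi

theorem exists_replace_block (h : IsBlockProduct E Z Q R) {S T : Finset α} {i : ι}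
    (hS : Q S) (hT : R i T) :
    ∃ S', Q S' ∧ S' ∩ Z i = T ∧ ∀ j ≠ i, S' ∩ Z j = S ∩ Z j := by
  classical
  set t := Function.update (fun j => S ∩ Z j) i T
  have ht j : t j ⊆ Z j := by
    obtain rfl | hji := eq_or_ne j i
    · simpa [t] using h.subset_block j T hT
    · simp [t, hji]
  have hblock := biUnion_inter_of_pairwise_disjoint h.pairwise_disjoint ht
  refine ⟨univ.biUnion t, ?_, by simp [hblock, t], fun j hji => by simp [hblock, t, hji]⟩
  refine (h.iff_forall_inter _ (biUnion_subset_of_forall_subset h.biUnion_eq ht)).2 fun j => ?_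
  rw [hblock]
  obtain rfl | hji := eq_or_ne j i
  · simpa [t] using hT
  · simpa [t, hji] using (h.iff_forall_inter S (h.subset S hS)).1 hS j

theorem minimal (h : IsBlockProduct E Z Q R) :
    IsBlockProduct E Z (fun S => Q S ∧ ∀ S', Q S' → ¬ S' ⊂ S)
    (fun i T => R i T ∧ ∀ T', T' ⊂ T → ¬ R i T') := by
  refine ⟨h.pairwise_disjoint, h.biUnion_eq, fun S hS => h.subset S hS.1,
    fun i T hT => h.subset_block i T hT.1, fun S hSE => ⟨?_, ?_⟩⟩
  · rintro ⟨hS, hmin⟩ i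
    refine ⟨(h.iff_forall_inter S hSE).1 hS i, fun T hT hRT => ?_⟩
    obtain ⟨S', hS', hS'i, hS'j⟩ := h.exists_replace_block hS hRT
    refine hmin S' hS' (ssubset_of_subset_of_ne ?_ ?_)
    · rw [← biUnion_inter_of_subset_biUnion h.biUnion_eq (h.subset S' hS')]
      refine biUnion_subset.2 fun j _ => ?_
      obtain rfl | hji := eq_or_ne j i
      · exact hS'i ▸ hT.subset.trans inter_subset_left
      · exact hS'j j hji ▸ inter_subset_left
    · rintro rfl
      exact hT.ne hS'i.symm
  · intro hmin
    refine ⟨(h.iff_forall_inter S hSE).2 fun i => (hmin i).1, fun S' hS' hss => hss.ne ?_⟩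
    have hS'E := h.subset S' hS'
    rw [← biUnion_inter_of_subset_biUnion h.biUnion_eq hS'E,
      ← biUnion_inter_of_subset_biUnion h.biUnion_eq hSE]
    refine biUnion_congr rfl fun i _ => ?_
    by_contra hne
    exact (hmin i).2 _ (ssubset_of_subset_of_ne (inter_subset_inter_right hss.subset) hne)
      ((h.iff_forall_inter S' hS'E).1 hS' i)

theorem minimum (h : IsBlockProduct E Z Q R) :
    IsBlockProduct E Z (fun S => Q S ∧ ∀ S', Q S' → S.card ≤ S'.card)
    (fun i T => R i T ∧ ∀ T', R i T' → T.card ≤ T'.card) := by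
  classical
  have hcard {S} (hS : S ⊆ E) := card_eq_sum_card_inter h.pairwise_disjoint h.biUnion_eq hS
  refine ⟨h.pairwise_disjoint, h.biUnion_eq, fun S hS => h.subset S hS.1,
    fun i T hT => h.subset_block i T hT.1, fun S hSE => ⟨?_, ?_⟩⟩
  · rintro ⟨hS, hmin⟩ i
    refine ⟨(h.iff_forall_inter S hSE).1 hS i, fun T hRT => ?_⟩
    obtain ⟨S', hS', hS'i, hS'j⟩ := h.exists_replace_block hS hRT
    have hle := hmin S' hS'
    rw [hcard hSE, hcard (h.subset S' hS'), ← add_sum_erase _ _ (mem_univ i),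
      ← add_sum_erase _ _ (mem_univ i), hS'i,
      sum_congr rfl fun j hj => by rw [← hS'j j (ne_of_mem_erase hj)]] at hle
    exact le_of_add_le_add_right hle
  · intro hmin
    refine ⟨(h.iff_forall_inter S hSE).2 fun i => (hmin i).1, fun S' hS' => ?_⟩
    rw [hcard hSE, hcard (h.subset S' hS')]
    exact sum_le_sum fun i _ => (hmin i).2 _ ((h.iff_forall_inter S' (h.subset S' hS')).1 hS' i)

end IsBlockProduct

end Partition

theorem List.IsChain.exists_extension_or_neighbours {α : Type*} {r : α → α → Prop}
    (hr : ∀ x y, r x y → r y x) {l : List α} {a b : α} (hnd : l.Nodup) (hch : l.IsChain r)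
    (ha : a ∈ l) (hab : r a b) :
    (∃ l' : List α, l'.Perm (b :: l) ∧ l'.IsChain r) ∨
      ∃ x y, x ∈ l ∧ y ∈ l ∧ x ≠ y ∧ x ≠ a ∧ y ≠ a ∧ r a x ∧ r a y := by
  obtain ⟨s, t, rfl⟩ := append_of_mem ha
  rw [isChain_split] at hch
  rcases t with _ | ⟨y, t⟩
  · refine .inl ⟨s ++ [a, b], ?_, isChain_split.2 ⟨hch.1, by simpa using hab⟩⟩
    simpa using perm_append_singleton b (s ++ [a])
  rcases s.eq_nil_or_concat with rfl | ⟨s, x, rfl⟩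
  · exact .inl ⟨b :: a :: y :: t, .refl _, hch.2.cons_cons (hr _ _ hab)⟩
  right
  simp only [concat_eq_append, append_assoc, singleton_append, isChain_append_cons_cons,
    isChain_cons_cons] at hch hnd
  refine ⟨x, y, by simp, by simp, ?_, ?_, ?_, hr _ _ hch.1.2.1, hch.2.1⟩ <;> intro hxy <;>
    subst hxy <;> simp_all [nodup_append, nodup_cons]

theorem Shares.symm {V : Type} {e f : V × V} : Shares e f → Shares f e :=
  Or.imp Eq.symm Eq.symm

theorem Finset.mem_or_mem_of_subset_of_card_le_two {α : Type*} [DecidableEq α] {s t : Finset α}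
    (hst : s ⊆ t) (hs : s.Nonempty) (ht : t.card ≤ 2) {a b : α} (ha : a ∈ t) (hb : b ∈ t)
    (hab : a ≠ b) : a ∈ s ∨ b ∈ s := by
  have hpair : {a, b} = t :=
    eq_of_subset_of_card_le (insert_subset ha (singleton_subset_iff.2 hb)) (by rwa [card_pair hab])
  obtain ⟨c, hc⟩ := hs
  have hc' := hst hc
  rw [← hpair, mem_insert, mem_singleton] at hc'
  rcases hc' with rfl | rfl
  exacts [.inl hc, .inr hc]

theorem Finset.mem_of_subset_of_card_eq_one {α : Type*} {s t : Finset α} (hst : s ⊆ t)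
    (hs : s.Nonempty) (ht : t.card = 1) {a : α} (ha : a ∈ t) : a ∈ s :=
  eq_of_subset_of_card_le hst (ht ▸ hs.card_pos) ▸ ha

section Network

open Function

variable {V : Type} [DecidableEq V] {E S : Finset (V × V)} {p : ℕ} {X : Finset V} {v : V}

theorem indeg_pos_iff : 0 < indeg E v ↔ ∃ u, (u, v) ∈ E := by
  simp [indeg, Finset.card_pos, Finset.filter_nonempty_iff]

theorem outdeg_pos_iff : 0 < outdeg E v ↔ ∃ w, (v, w) ∈ E := by
  simp [outdeg, Finset.card_pos, Finset.filter_nonempty_iff]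

theorem mem_verts_iff : v ∈ verts E ↔ 0 < outdeg E v ∨ 0 < indeg E v := by
  simp [verts, outdeg_pos_iff, indeg_pos_iff]

theorem indeg_mono (hS : S ⊆ E) (v : V) : indeg S v ≤ indeg E v :=
  card_le_card (filter_subset_filter _ hS)

theorem outdeg_mono (hS : S ⊆ E) (v : V) : outdeg S v ≤ outdeg E v :=
  card_le_card (filter_subset_filter _ hS)

namespace IsPhyloNet

theorem deg_of_mem_leaves (hN : IsPhyloNet E p X) (hv : v ∈ X) :
    indeg E v = 1 ∧ outdeg E v = 0 := by
  rw [← hN.leaves_eq] at hv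
  exact (mem_filter.1 hv).2

theorem deg_le_two (hN : IsPhyloNet E p X) (v : V) : indeg E v ≤ 2 ∧ outdeg E v ≤ 2 := by
  by_cases hv : v ∈ verts E
  · by_cases hX : v ∈ X
    · have := hN.deg_of_mem_leaves hX; omega
    · by_cases h0 : indeg E v = 0
      · have := hN.root_outdeg v hv h0; omega
      · have := hN.internal_deg v hv h0 hX; omega
  · rw [mem_verts_iff] at hv
    omega

end IsPhyloNet

def KeepsIncidence (E S : Finset (V × V)) : Prop :=
  ∀ v, (0 < indeg E v → 0 < indeg S v) ∧ (0 < outdeg E v → 0 < outdeg S v)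

theorem IsSupportNet.keepsIncidence (hN : IsPhyloNet E p X) (hS : IsSupportNet E S p X) :
    KeepsIncidence E S := by
  obtain ⟨hSE, hverts, hNS⟩ := hS
  refine fun v => ⟨fun hE => Nat.pos_of_ne_zero fun h0 => ?_, fun hE => ?_⟩
  · have hroots : (verts E).filter (indeg E · = 0) = (verts S).filter (indeg S · = 0) := by
      refine eq_of_subset_of_card_le (fun x hx => ?_) (by rw [hNS.roots_card, hN.roots_card])
      rw [mem_filter] at hx ⊢
      exact ⟨hverts ▸ hx.1, Nat.eq_zero_of_le_zero (hx.2 ▸ indeg_mono hSE x)⟩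
    have hv : v ∈ (verts S).filter (indeg S · = 0) :=
      mem_filter.2 ⟨hverts ▸ mem_verts_iff.2 (Or.inr hE), h0⟩
    rw [← hroots, mem_filter] at hv
    omega
  · have hvS : v ∈ verts S := hverts ▸ mem_verts_iff.2 (Or.inl hE)
    have hvX : v ∉ X := fun hvX => by have := hN.deg_of_mem_leaves hvX; omega
    by_cases h0 : indeg S v = 0
    · have := hNS.root_outdeg v hvS h0; omega
    · have := (hNS.internal_deg v hvS h0 hvX).2; omega

theorem isSupportNet_of_keepsIncidence (hN : IsPhyloNet E p X) (hSE : S ⊆ E)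
    (hk : KeepsIncidence E S) : IsSupportNet E S p X := by
  have hin v : indeg S v = 0 ↔ indeg E v = 0 := by
    have := indeg_mono hSE v; have := (hk v).1; omega
  have hout v : outdeg S v = 0 ↔ outdeg E v = 0 := by
    have := outdeg_mono hSE v; have := (hk v).2; omega
  have hverts : verts S = verts E := by
    ext v
    have := hin v; have := hout v
    rw [mem_verts_iff, mem_verts_iff]
    omega
  have hdeg v := And.intro (indeg_mono hSE v) (outdeg_mono hSE v)
  refine ⟨hSE, hverts, fun v hv => ?_, ?_, ?_, ?_, ?_⟩
  · exact hN.acyclic v (Relation.TransGen.mono (fun _ _ h => hSE h) v v hv)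
  · rw [hverts, filter_congr fun v _ => hin v, hN.roots_card]
  · intro v hv h0
    have := hN.root_outdeg v (hverts ▸ hv) ((hin v).1 h0)
    have := hdeg v; have := hout v; omega
  · rw [hverts, ← hN.leaves_eq]
    refine filter_congr fun v hv => ?_
    have := hdeg v; have := hin v; have := hout v
    by_cases hvX : v ∈ X
    · have := hN.deg_of_mem_leaves hvX; omega
    · by_cases h0 : indeg E v = 0
      · omega
      · have := hN.internal_deg v hv h0 hvX; omega
  · intro v hv h0 hvX
    have := hN.internal_deg v (hverts ▸ hv) (fun h => h0 ((hin v).2 h)) hvX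
    have := hdeg v; have := hin v; have := hout v; omega

open Classical in
theorem IsPhyloNet.card_shares_le_two (hN : IsPhyloNet E p X) {e : V × V} (he : e ∈ E) :
    ((E.erase e).filter (Shares e)).card ≤ 2 := by
  have hside (g : V × V → V) (hg : (E.filter (g · = g e)).card ≤ 2) :
      ((E.erase e).filter (g e = g ·)).card ≤ 1 := by
    rw [filter_erase, filter_congr fun _ _ => eq_comm, card_erase_of_mem (by simpa using he)]
    omega
  calc ((E.erase e).filter (Shares e)).card
      ≤ ((E.erase e).filter (e.1 = ·.1) ∪ (E.erase e).filter (e.2 = ·.2)).card :=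
        card_le_card fun f hf => by simpa [Shares, ← filter_or] using hf
    _ ≤ 2 := (card_union_le _ _).trans
        (add_le_add (hside Prod.fst (hN.deg_le_two _).2) (hside Prod.snd (hN.deg_le_two _).1))

/-- An edge at an end of a trail lets the trail be extended; an interior edge already shares
with its two neighbours in the trail, and a third sharing edge would break the degree bound. -/
theorem IsMaximalZigzagTrail.mem_of_shares (hN : IsPhyloNet E p X) {Z : Finset (V × V)}
    (hZ : IsMaximalZigzagTrail E Z) {e f : V × V} (he : e ∈ Z) (hf : f ∈ E)
    (hef : Shares e f) : f ∈ Z := by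
  classical
  by_contra hfZ
  obtain ⟨⟨hZE, l, -, hnd, rfl, hch⟩, hmax⟩ := hZ
  rw [List.mem_toFinset] at he hfZ
  rcases (hch : l.IsChain Shares).exists_extension_or_neighbours (fun _ _ => Shares.symm) hnd he
    hef with ⟨l', hperm, hch'⟩ | ⟨x, y, hx, hy, hxy, hxe, hye, hex, hey⟩
  · refine hmax (insert f l.toFinset) ⟨insert_subset hf hZE, l', ?_, ?_, ?_, hch'⟩
      (ssubset_insert (mt List.mem_toFinset.1 hfZ))
    · exact fun h => by simpa [h] using hperm.length_eq
    · exact hperm.nodup_iff.2 (List.nodup_cons.2 ⟨hfZ, hnd⟩)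
    · rw [List.toFinset_eq_of_perm _ _ hperm, List.toFinset_cons]
  · have hmem {g} (hg : g ∈ l ∨ g = f) (hge : g ≠ e) (heg : Shares e g) :
        g ∈ (E.erase e).filter (Shares e) := by
      refine mem_filter.2 ⟨mem_erase.2 ⟨hge, ?_⟩, heg⟩
      rcases hg with hg | rfl
      · exact hZE (List.mem_toFinset.2 hg)
      · exact hf
    have := (hN.card_shares_le_two (hZE (List.mem_toFinset.2 he))).trans_lt <|
      two_lt_card.2 ⟨x, hmem (.inl hx) hxe hex, y, hmem (.inl hy) hye hey,
        f, hmem (.inr rfl) (fun h => hfZ (h ▸ he)) hef, hxy,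
        fun h => hfZ (h ▸ hx), fun h => hfZ (h ▸ hy)⟩
    exact this.false

theorem KeepsIncidence.aAdmissible_inter (hN : IsPhyloNet E p X) (hSE : S ⊆ E)
    (hk : KeepsIncidence E S) {Z : Finset (V × V)} (hZE : Z ⊆ E) :
    AAdmissible E Z (S ∩ Z) := by
  have hin {e} (he : e ∈ Z) : (S.filter (·.2 = e.2)).Nonempty :=
    card_pos.1 <| (hk e.2).1 <| card_pos.2 ⟨e, mem_filter.2 ⟨hZE he, rfl⟩⟩
  have hout {e} (he : e ∈ Z) : (S.filter (·.1 = e.1)).Nonempty :=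
    card_pos.1 <| (hk e.1).2 <| card_pos.2 ⟨e, mem_filter.2 ⟨hZE he, rfl⟩⟩
  refine ⟨inter_subset_right, fun e he h1 => mem_inter.2 ⟨?_, he⟩,
    fun e₁ h₁ e₂ h₂ hne hsh => ?_⟩
  · rcases h1 with h1 | h1
    · exact (mem_filter.1 <| mem_of_subset_of_card_eq_one (filter_subset_filter _ hSE) (hout he)
        h1 (mem_filter.2 ⟨hZE he, rfl⟩)).1
    · exact (mem_filter.1 <| mem_of_subset_of_card_eq_one (filter_subset_filter _ hSE) (hin he)
        h1 (mem_filter.2 ⟨hZE he, rfl⟩)).1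
  · have hpick (g : V × V → V) (hs : (S.filter (g · = g e₁)).Nonempty)
        (ht : (E.filter (g · = g e₁)).card ≤ 2) (hg : g e₂ = g e₁) :
        e₁ ∈ S ∩ Z ∨ e₂ ∈ S ∩ Z := by
      rcases mem_or_mem_of_subset_of_card_le_two (filter_subset_filter _ hSE) hs ht
        (mem_filter.2 ⟨hZE h₁, rfl⟩) (mem_filter.2 ⟨hZE h₂, hg⟩) hne with h | h
      exacts [.inl (mem_inter.2 ⟨(mem_filter.1 h).1, h₁⟩),
        .inr (mem_inter.2 ⟨(mem_filter.1 h).1, h₂⟩)]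
    rcases hsh with h | h
    · exact hpick Prod.fst (hout h₁) (hN.deg_le_two _).2 h.symm
    · exact hpick Prod.snd (hin h₁) (hN.deg_le_two _).1 h.symm

namespace AAdmissible

variable {Z T : Finset (V × V)} {e : V × V}

theorem exists_mem_head (hN : IsPhyloNet E p X) (hZ : IsMaximalZigzagTrail E Z)
    (hT : AAdmissible E Z T) (he : e ∈ Z) : ∃ f ∈ T, f.2 = e.2 := by
  have hmem : e ∈ E.filter (·.2 = e.2) := mem_filter.2 ⟨hZ.1.1 he, rfl⟩
  by_cases h1 : indeg E e.2 = 1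
  · exact ⟨e, hT.2.1 e he (.inr h1), rfl⟩
  obtain ⟨f, hf, hfe⟩ := exists_mem_ne (s := E.filter (·.2 = e.2))
    (by have := card_pos.2 ⟨e, hmem⟩; unfold indeg at h1; omega) e
  rw [mem_filter] at hf
  have hfZ := hZ.mem_of_shares hN he hf.1 (.inr hf.2.symm)
  rcases hT.2.2 e he f hfZ hfe.symm (.inr hf.2.symm) with h | h
  exacts [⟨e, h, rfl⟩, ⟨f, h, hf.2⟩]

theorem exists_mem_tail (hN : IsPhyloNet E p X) (hZ : IsMaximalZigzagTrail E Z)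
    (hT : AAdmissible E Z T) (he : e ∈ Z) : ∃ f ∈ T, f.1 = e.1 := by
  have hmem : e ∈ E.filter (·.1 = e.1) := mem_filter.2 ⟨hZ.1.1 he, rfl⟩
  by_cases h1 : outdeg E e.1 = 1
  · exact ⟨e, hT.2.1 e he (.inl h1), rfl⟩
  obtain ⟨f, hf, hfe⟩ := exists_mem_ne (s := E.filter (·.1 = e.1))
    (by have := card_pos.2 ⟨e, hmem⟩; unfold outdeg at h1; omega) e
  rw [mem_filter] at hf
  have hfZ := hZ.mem_of_shares hN he hf.1 (.inl hf.2.symm)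
  rcases hT.2.2 e he f hfZ hfe.symm (.inl hf.2.symm) with h | h
  exacts [⟨e, h, rfl⟩, ⟨f, h, hf.2⟩]

end AAdmissible

variable {ι : Type*} [Fintype ι] {Z : ι → Finset (V × V)}

theorem keepsIncidence_of_forall_aAdmissible (hN : IsPhyloNet E p X)
    (hmax : ∀ i, IsMaximalZigzagTrail E (Z i)) (hcover : univ.biUnion Z = E)
    (hadm : ∀ i, AAdmissible E (Z i) (S ∩ Z i)) : KeepsIncidence E S := by
  have hblock {e} (he : e ∈ E) : ∃ i, e ∈ Z i := by
    rw [← hcover] at he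
    simpa using he
  refine fun v => ⟨fun h => ?_, fun h => ?_⟩
  · obtain ⟨u, hu⟩ := indeg_pos_iff.1 h
    obtain ⟨i, hi⟩ := hblock hu
    obtain ⟨f, hf, hfv⟩ := (hadm i).exists_mem_head hN (hmax i) hi
    exact indeg_pos_iff.2 ⟨f.1, (Prod.ext rfl hfv : f = (f.1, v)) ▸ (mem_inter.1 hf).1⟩
  · obtain ⟨w, hw⟩ := outdeg_pos_iff.1 h
    obtain ⟨i, hi⟩ := hblock hw
    obtain ⟨f, hf, hfv⟩ := (hadm i).exists_mem_tail hN (hmax i) hi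
    exact outdeg_pos_iff.2 ⟨f.2, (Prod.ext hfv rfl : f = (v, f.2)) ▸ (mem_inter.1 hf).1⟩

theorem isBlockProduct_isSupportNet (hN : IsPhyloNet E p X)
    (hmax : ∀ i, IsMaximalZigzagTrail E (Z i)) (hdisj : Pairwise (Disjoint on Z))
    (hcover : univ.biUnion Z = E) :
    IsBlockProduct E Z (IsSupportNet E · p X) (fun i => AAdmissible E (Z i)) := by
  refine ⟨hdisj, hcover, fun S hS => hS.1, fun i T hT => hT.1, fun S hSE => ⟨?_, ?_⟩⟩
  · exact fun hS i => (hS.keepsIncidence hN).aAdmissible_inter hN hSE (hmax i).1.1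
  · exact fun hadm => isSupportNet_of_keepsIncidence hN hSE
      (keepsIncidence_of_forall_aAdmissible hN hmax hcover hadm)

end Network

theorem stmt9_general (p : ℕ) (X : Finset V)
    (E : Finset (V × V)) (hN : IsPhyloNet E p X)
    (d : ℕ) (Z : Fin d → Finset (V × V))
    (hmax : ∀ i, IsMaximalZigzagTrail E (Z i))
    (hdisj : ∀ i j, i ≠ j → Disjoint (Z i) (Z j))
    (hcover : Finset.univ.biUnion Z = E) :
    Set.ncard {S | IsSupportNet E S p X} = ∏ i : Fin d, Set.ncard {S | AAdmissible E (Z i) S} ∧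
    Set.ncard {S | IsMinimalSupportNet E S p X} = ∏ i : Fin d, Set.ncard {S | BAdmissible E (Z i) S} ∧
    Set.ncard {S | IsMinimumSupportNet E S p X} = ∏ i : Fin d, Set.ncard {S | CAdmissible E (Z i) S} := by
  have h := isBlockProduct_isSupportNet hN hmax hdisj hcover
  exact ⟨h.ncard_eq_prod, h.minimal.ncard_eq_prod, h.minimum.ncard_eq_prod⟩

/-- `|A_N| = ∏ᵢ |S_A(Zᵢ)|`, `|B_N| = ∏ᵢ |S_B(Zᵢ)|`, and `|C_N| = ∏ᵢ |S_C(Zᵢ)|`. -/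
theorem stmt9 (p : ℕ) (hp : 1 ≤ p) (X : Finset V) (hX : X.Nonempty)
    (E : Finset (V × V)) (hN : IsPhyloNet E p X)
    (d : ℕ) (Z : Fin d → Finset (V × V))
    (hmax : ∀ i, IsMaximalZigzagTrail E (Z i))
    (hdisj : ∀ i j, i ≠ j → Disjoint (Z i) (Z j))
    (hcover : Finset.univ.biUnion Z = E) :
    Set.ncard {S | IsSupportNet E S p X} = ∏ i : Fin d, Set.ncard {S | AAdmissible E (Z i) S} ∧
    Set.ncard {S | IsMinimalSupportNet E S p X} = ∏ i : Fin d, Set.ncard {S | BAdmissible E (Z i) S} ∧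
    Set.ncard {S | IsMinimumSupportNet E S p X} = ∏ i : Fin d, Set.ncard {S | CAdmissible E (Z i) S} :=
  stmt9_general p X E hN d Z hmax hdisj hcover
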